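/- For a > 3, let SVC_a be the Smith–Volterra–Cantor set: starting from [0,1], at step k (k ≥ 1) remove from each of the 2^{k-1} remaining closed intervals a centered open interval of length a^{-k}. Then SVC_a has positive Lebesgue measure (its measure is 1 − Σ_{k≥1} 2^{k-1} a^{-k} = 1 − 1/(a−2) > 0), its Minkowski dimension equals 1, while the number of complementary intervals of length exceeding 2t grows like (2t)^{-log_a 2}, so that inf{q : limsup_{t→0⁺} t^q β₀(SVC_a;t) = 0} = log_a 2 < 1. -/

import Mathlib

/-!
The gaps are disjoint open intervals of total length `∑ 2^k a^{-(k+1)} = 1/(a-2) < 1`, which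
gives the measure of `A`. Since `A` has positive measure, `ε^{q-1} · vol(A_ε)` stays above
`vol A` for `q ≤ 1`, while `vol(A_ε)` is bounded, so the Minkowski exponent is `1`. A gap of
generation `k` is longer than `2t` exactly when `k < K(t) := ⌈log_a (1/(2t)) - 1⌉`, so
`β₀(A;t) = 2^{K(t)}`, which lies between constant multiples of `t^{-log_a 2}`.
-/

open Metric MeasureTheory Filter Set Topology
open scoped ENNReal

noncomputable section

lemma tendsto_rpow_nhdsGT_zero {s : ℝ} (hs : 0 < s) :
    Tendsto (fun t : ℝ => t ^ s) (𝓝[>] 0) (𝓝 0) := by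
  simpa [Real.zero_rpow hs.ne'] using
    (Real.continuousAt_rpow_const 0 s (Or.inr hs.le)).tendsto.mono_left nhdsWithin_le_nhds

lemma eventually_one_le_rpow_nhdsGT_zero {s : ℝ} (hs : s ≤ 0) :
    ∀ᶠ t : ℝ in 𝓝[>] 0, 1 ≤ t ^ s := by
  filter_upwards [Ioc_mem_nhdsGT one_pos] with t ht
  exact Real.one_le_rpow_of_pos_of_le_one_of_nonpos ht.1 ht.2 hs

lemma rpow_logb_comm (a : ℝ) {b s : ℝ} (hb : 0 < b) (hs : 0 < s) :
    b ^ Real.logb a s = s ^ Real.logb a b := by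
  rw [Real.rpow_def_of_pos hb, Real.rpow_def_of_pos hs, Real.logb, Real.logb]
  ring_nf

lemma natCeil_sub_one_le {x : ℝ} (hx : 0 ≤ x) : (⌈x - 1⌉₊ : ℝ) ≤ x := by
  rcases le_or_gt 1 x with h | h
  · linarith [Nat.ceil_lt_add_one (sub_nonneg.2 h)]
  · simp [Nat.ceil_eq_zero.2 (by linarith : x - 1 ≤ 0), hx]

lemma volume_iUnion_biUnion_Ioo {n : ℕ → ℕ} {ℓ : ℕ → ℝ} {I : ℕ → ℕ → Set ℝ}
    (hI : ∀ k i, i < n k → ∃ c, I k i = Ioo c (c + ℓ k))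
    (hdisj : ∀ k i k' i', i < n k → i' < n k' → (k, i) ≠ (k', i') →
      Disjoint (I k i) (I k' i')) :
    volume (⋃ k, ⋃ i ∈ Finset.range (n k), I k i) = ∑' k, n k * ENNReal.ofReal (ℓ k) := by
  have hmeas : ∀ k, ∀ i ∈ Finset.range (n k), MeasurableSet (I k i) := fun k i hi => by
    obtain ⟨c, hc⟩ := hI k i (Finset.mem_range.1 hi)
    exact hc ▸ measurableSet_Ioo
  rw [measure_iUnion]
  · refine tsum_congr fun k => ?_
    rw [measure_biUnion_finset _ (hmeas k)]
    · rw [Finset.sum_congr rfl fun i hi => ?_, Finset.sum_const, Finset.card_range, nsmul_eq_mul]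
      obtain ⟨c, hc⟩ := hI k i (Finset.mem_range.1 hi)
      rw [hc, Real.volume_Ioo, add_sub_cancel_left]
    · intro i hi j hj hij
      exact hdisj k i k j (Finset.mem_range.1 hi) (Finset.mem_range.1 hj) (by simpa using hij)
  · intro k k' hkk'
    simp only [Function.onFun, disjoint_iUnion_left, disjoint_iUnion_right]
    intro j hj i hi
    exact hdisj k i k' j (Finset.mem_range.1 hi) (Finset.mem_range.1 hj) (by simp [hkk'])
  · exact fun k => Finset.measurableSet_biUnion _ (hmeas k)

lemma tsum_two_pow_mul_zpow_neg_succ {a : ℝ} (ha : 2 < a) :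
    ∑' k : ℕ, (2 : ℝ≥0∞) ^ k * ENNReal.ofReal (a ^ (-(k + 1 : ℤ))) =
      ENNReal.ofReal (1 / (a - 2)) := by
  have ha0 : 0 < a := by linarith
  have hr0 : 0 ≤ 2 / a := by positivity
  have hr1 : 2 / a < 1 := (div_lt_one ha0).2 ha
  have hterm : ∀ k : ℕ, (2 : ℝ≥0∞) ^ k * ENNReal.ofReal (a ^ (-(k + 1 : ℤ))) =
      ENNReal.ofReal (a⁻¹ * (2 / a) ^ k) := fun k => by
    rw [← ENNReal.ofReal_ofNat, ← ENNReal.ofReal_pow zero_le_two,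
      ← ENNReal.ofReal_mul (by positivity), zpow_neg, zpow_add₀ ha0.ne', div_pow,
      zpow_natCast, zpow_one]
    congr 1
    field_simp
  rw [tsum_congr hterm, ← ENNReal.ofReal_tsum_of_nonneg (fun k => by positivity)
    ((summable_geometric_of_lt_one hr0 hr1).mul_left _), tsum_mul_left,
    tsum_geometric_of_lt_one hr0 hr1]
  congr 1
  field_simp

lemma limsup_rpow_mul_measure_cthickening_eq_zero_iff {X : Type*} [PseudoMetricSpace X]
    [ProperSpace X] [MeasurableSpace X] {μ : Measure X} [IsFiniteMeasureOnCompacts μ]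
    {A : Set X} (hA : Bornology.IsBounded A) (hμA : μ A ≠ 0) {s : ℝ} :
    limsup (fun ε : ℝ => ENNReal.ofReal (ε ^ s) * μ (cthickening ε A)) (𝓝[>] 0) = 0 ↔
      0 < s := by
  constructor
  · intro h
    by_contra! hs
    refine hμA (le_zero_iff.1 (h ▸ le_limsup_of_frequently_le' ?_))
    refine ((eventually_one_le_rpow_nhdsGT_zero hs).mono fun ε hε => ?_).frequently
    calc μ A ≤ μ (cthickening ε A) := measure_mono (self_subset_cthickening A)
      _ ≤ ENNReal.ofReal (ε ^ s) * μ (cthickening ε A) :=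
        le_mul_of_one_le_left zero_le (ENNReal.one_le_ofReal.2 hε)
  · intro hs
    have hfin : μ (cthickening 1 A) ≠ ⊤ := hA.cthickening.measure_lt_top.ne
    have hlim : Tendsto (fun ε : ℝ => ENNReal.ofReal (ε ^ s) * μ (cthickening 1 A))
        (𝓝[>] 0) (𝓝 0) := by
      simpa using ENNReal.Tendsto.mul_const
        (ENNReal.tendsto_ofReal (tendsto_rpow_nhdsGT_zero hs)) (Or.inr hfin)
    refine (tendsto_of_tendsto_of_tendsto_of_le_of_le' tendsto_const_nhds hlim
      (Eventually.of_forall fun _ => zero_le) ?_).limsup_eq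
    filter_upwards [Ioc_mem_nhdsGT one_pos] with ε hε
    gcongr
    exact cthickening_mono hε.2 A

lemma limsup_rpow_mul_eq_zero_iff {f : ℝ → ℝ} {c C d : ℝ} (hc : 0 < c)
    (hf : ∀ᶠ t in 𝓝[>] 0, f t ∈ Icc (c * t ^ (-d)) (C * t ^ (-d))) {q : ℝ} :
    limsup (fun t : ℝ => ((t ^ q * f t : ℝ) : EReal)) (𝓝[>] 0) = 0 ↔ d < q := by
  have hbound :
      ∀ᶠ t in 𝓝[>] 0, t ^ q * f t ∈ Icc (c * t ^ (q - d)) (C * t ^ (q - d)) := by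
    filter_upwards [hf, self_mem_nhdsWithin] with t ht (ht0 : 0 < t)
    have hq : 0 < t ^ q := Real.rpow_pos_of_pos ht0 q
    have hqd : t ^ (q - d) = t ^ q * t ^ (-d) := by rw [← Real.rpow_add ht0, sub_eq_add_neg]
    rw [hqd]
    constructor <;> nlinarith [ht.1, ht.2]
  constructor
  · intro h
    by_contra! hq
    have hlarge := hbound.and (eventually_one_le_rpow_nhdsGT_zero (sub_nonpos.2 hq))
    have hle : ((c : ℝ) : EReal) ≤ 0 := h ▸ le_limsup_of_frequently_le' <|
      (hlarge.mono fun t ⟨ht, _⟩ => EReal.coe_le_coe_iff.2 (by nlinarith [ht.1])).frequently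
    exact (EReal.coe_nonpos.1 hle).not_gt hc
  · intro hq
    have hlim (K : ℝ) : Tendsto (fun t : ℝ => K * t ^ (q - d)) (𝓝[>] 0) (𝓝 0) := by
      simpa using (tendsto_rpow_nhdsGT_zero (sub_pos.2 hq)).const_mul K
    have hR : Tendsto (fun t : ℝ => t ^ q * f t) (𝓝[>] 0) (𝓝 0) :=
      tendsto_of_tendsto_of_tendsto_of_le_of_le' (hlim c) (hlim C)
        (hbound.mono fun _ h => h.1) (hbound.mono fun _ h => h.2)
    exact (EReal.tendsto_coe.2 hR).limsup_eq

lemma ncard_pairs_lt_two_pow_add_one (K : ℕ) :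
    {p : ℕ × ℕ | p.2 < 2 ^ p.1 ∧ p.1 < K}.ncard + 1 = 2 ^ K := by
  have hS : {p : ℕ × ℕ | p.2 < 2 ^ p.1 ∧ p.1 < K} =
      ↑((Finset.range K).biUnion fun k => ({k} : Finset ℕ) ×ˢ Finset.range (2 ^ k)) := by
    ext ⟨k, i⟩
    simp [and_comm]
  have hdisj : (↑(Finset.range K) : Set ℕ).PairwiseDisjoint
      fun k => ({k} : Finset ℕ) ×ˢ Finset.range (2 ^ k) := fun k _ k' _ hkk' =>
    Finset.disjoint_product.2 (Or.inl (Finset.disjoint_singleton.2 hkk'))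
  rw [hS, Set.ncard_coe_finset, Finset.card_biUnion hdisj]
  simp only [Finset.card_product, Finset.card_singleton, Finset.card_range, one_mul]
  rw [Nat.geomSum_eq le_rfl, Nat.div_one, Nat.sub_add_cancel Nat.one_le_two_pow]

lemma lt_zpow_neg_succ_iff {a s : ℝ} (ha : 1 < a) (hs : 0 < s) (k : ℕ) :
    s < a ^ (-(k + 1 : ℤ)) ↔ k < ⌈-Real.logb a s - 1⌉₊ := by
  have hcast : a ^ (-(k + 1 : ℤ)) = a ^ (-((k : ℝ) + 1)) := by norm_cast
  rw [hcast, ← Real.logb_lt_iff_lt_rpow ha hs, Nat.lt_ceil]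
  constructor <;> intro h <;> linarith

lemma one_add_ncard_gaps_mem_Icc {a t : ℝ} (ha : 1 < a) (ht : 0 < t) (ht1 : t ≤ 1 / 2) :
    (1 + {p : ℕ × ℕ | p.2 < 2 ^ p.1 ∧ 2 * t < a ^ (-(p.1 + 1 : ℤ))}.ncard : ℝ) ∈
      Icc ((2 ^ Real.logb a 2)⁻¹ / 2 * t ^ (-Real.logb a 2))
        ((2 ^ Real.logb a 2)⁻¹ * t ^ (-Real.logb a 2)) := by
  set d := Real.logb a 2
  set x := -Real.logb a (2 * t)
  have hx : 0 ≤ x := neg_nonneg.2 (Real.logb_nonpos ha (by positivity) (by linarith))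
  have hcount :
      (1 + {p : ℕ × ℕ | p.2 < 2 ^ p.1 ∧ 2 * t < a ^ (-(p.1 + 1 : ℤ))}.ncard : ℝ) =
        (2 : ℝ) ^ ⌈x - 1⌉₊ := by
    simp only [lt_zpow_neg_succ_iff ha (by positivity : 0 < 2 * t)]
    rw [add_comm]
    exact_mod_cast ncard_pairs_lt_two_pow_add_one _
  have h2x : (2 : ℝ) ^ x = (2 ^ d)⁻¹ * t ^ (-d) := by
    rw [Real.rpow_neg zero_le_two, rpow_logb_comm a two_pos (by positivity),
      Real.mul_rpow zero_le_two ht.le, mul_inv, Real.rpow_neg ht.le]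
  have hlo := Real.rpow_le_rpow_of_exponent_le one_le_two (Nat.le_ceil (x - 1))
  have hhi := Real.rpow_le_rpow_of_exponent_le one_le_two (natCeil_sub_one_le hx)
  rw [Real.rpow_sub_one two_ne_zero, h2x] at hlo
  rw [h2x] at hhi
  rw [hcount, ← Real.rpow_natCast, div_mul_eq_mul_div]
  exact ⟨hlo, hhi⟩

theorem smith_volterra_cantor (a : ℝ) (ha : 3 < a)
    (A : Set ℝ) (hA : IsCompact A) (hsub : A ⊆ Set.Icc 0 1)
    (I : ℕ → ℕ → Set ℝ)
    (hIlen : ∀ k i, i < 2 ^ k → ∃ c : ℝ, I k i = Set.Ioo c (c + a ^ (-(k + 1 : ℤ))))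
    (hdisj : ∀ k i k' i', i < 2 ^ k → i' < 2 ^ k' → (k, i) ≠ (k', i') →
      Disjoint (I k i) (I k' i'))
    (hcompl : Set.Icc (0:ℝ) 1 \ A = ⋃ k, ⋃ i ∈ Finset.range (2 ^ k), I k i) :
    volume A = ENNReal.ofReal (1 - 1 / (a - 2)) ∧
    0 < 1 - 1 / (a - 2) ∧
    sInf {q : ℝ | 0 ≤ q ∧
        Filter.limsup (fun ε : ℝ =>
          ENNReal.ofReal (ε ^ (q - 1)) * volume (Metric.cthickening ε A)) (𝓝[>] 0)
          = 0} = 1 ∧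
    sInf {q : ℝ |
        Filter.limsup (fun t : ℝ =>
          ((t ^ q * (1 + (Set.ncard {p : ℕ × ℕ |
              p.2 < 2 ^ p.1 ∧ 2 * t < a ^ (-(p.1 + 1 : ℤ))} : ℝ)) : ℝ) : EReal))
          (𝓝[>] 0) = (0 : EReal)} = Real.logb a 2 ∧
    Real.logb a 2 < 1 := by
  have hgaps : volume (Icc (0 : ℝ) 1 \ A) = ENNReal.ofReal (1 / (a - 2)) := by
    rw [hcompl, volume_iUnion_biUnion_Ioo hIlen hdisj]
    push_cast
    exact tsum_two_pow_mul_zpow_neg_succ (by linarith)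
  have hvol : volume A = ENNReal.ofReal (1 - 1 / (a - 2)) := by
    rw [← sdiff_sdiff_cancel_left hsub, measure_sdiff sdiff_subset
      (measurableSet_Icc.diff hA.isClosed.measurableSet).nullMeasurableSet
      (hgaps ▸ ENNReal.ofReal_ne_top), hgaps, Real.volume_Icc,
      ← ENNReal.ofReal_sub _ (one_div_nonneg.2 (by linarith)), sub_zero]
  have hpos : 0 < 1 - 1 / (a - 2) := by
    rw [sub_pos, div_lt_one] <;> linarith
  refine ⟨hvol, hpos, ?_, ?_, ?_⟩
  · have hvol0 : volume A ≠ 0 := by rw [hvol]; exact (ENNReal.ofReal_pos.2 hpos).ne'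
    refine (congrArg sInf ?_).trans csInf_Ioi
    ext q
    rw [mem_ofPred_eq, limsup_rpow_mul_measure_cthickening_eq_zero_iff hA.isBounded hvol0,
      sub_pos, mem_Ioi]
    exact ⟨And.right, fun h => ⟨by linarith, h⟩⟩
  · refine (congrArg sInf ?_).trans csInf_Ioi
    ext q
    refine limsup_rpow_mul_eq_zero_iff (c := (2 ^ Real.logb a 2)⁻¹ / 2)
      (C := (2 ^ Real.logb a 2)⁻¹) (by positivity) ?_
    filter_upwards [Ioc_mem_nhdsGT one_half_pos] with t ht
    exact one_add_ncard_gaps_mem_Icc (by linarith) ht.1 ht.2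
  · rw [Real.logb_lt_iff_lt_rpow (by linarith) two_pos, Real.rpow_one]
    linarith

end
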